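/- Let D be a linearly connected digraph with η ≥ 3 strong components, all nontrivial. Let p and q be indices with p + 2 ≤ q ≤ η, let x ∈ U_i^{(p)} and z ∈ U_k^{(q)}. If D has a directed (x,z)-walk of length s·κ_{p+1}κ_{p+2}···κ_q for some positive integer s, then there exist j ∈ ZMod κ_{p+1} and a vertex y ∈ U_j^{(p+1)} such that: (i) there is a positive integer K such that for every integer k' ≥ K there is a directed (x,y)-walk of length k'·κ_{p+1}; and (ii) there is a positive integer K' such that for every integer k'' ≥ K' there is a directed (y,z)-walk of length k''·κ_{p+1}. -/

import Mathlib

/-- A digraph: a finite vertex type with an irreflexive arc relation (no loops). -/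
structure Digraph' (V : Type*) where
  Adj : V → V → Prop
  irrefl : ∀ v, ¬ Adj v v

namespace Digraph'

variable {V : Type*}

/-- There is a directed walk of length `m` from `x` to `y` in `D`;
i.e. `y` is an `m`-step prey of `x`. -/
def HasWalk (D : Digraph' V) (m : ℕ) (x y : V) : Prop :=
  ∃ f : ℕ → V, f 0 = x ∧ f m = y ∧ ∀ t, t < m → D.Adj (f t) (f (t + 1))

/-- There is a directed walk of length `m` from `x` to `y` staying inside `S`. -/
def HasWalkIn (D : Digraph' V) (S : Set V) (m : ℕ) (x y : V) : Prop :=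
  ∃ f : ℕ → V, f 0 = x ∧ f m = y ∧ (∀ t, t ≤ m → f t ∈ S) ∧
    ∀ t, t < m → D.Adj (f t) (f (t + 1))

/-- The `m`-step competition graph `C(D^m)` of `D`. -/
def compGraph (D : Digraph' V) (m : ℕ) : SimpleGraph V where
  Adj u v := u ≠ v ∧ ∃ z, D.HasWalk m u z ∧ D.HasWalk m v z
  symm := by
    constructor
    rintro u v ⟨hne, z, h1, h2⟩
    exact ⟨hne.symm, z, h2, h1⟩
  loopless := ⟨fun v h => h.1 rfl⟩

/-- The sequence `{C(D^m)}_{m ≥ 1}` converges. -/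
def CompConverges (D : Digraph' V) : Prop :=
  ∃ N : ℕ, 1 ≤ N ∧ ∀ m, N ≤ m → D.compGraph m = D.compGraph N

/-- The sequence `{C(D^m)}_{m ≥ 1}` converges to the graph `G`. -/
def CompConvergesTo (D : Digraph' V) (G : SimpleGraph V) : Prop :=
  ∃ N : ℕ, 1 ≤ N ∧ ∀ m, N ≤ m → D.compGraph m = G

/-- `D` is linearly connected with strong components `Vset 1, …, Vset η`. -/
structure IsLinConn (D : Digraph' V) (η : ℕ) (Vset : ℕ → Set V) : Prop where
  nonempty : ∀ i, 1 ≤ i → i ≤ η → (Vset i).Nonempty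
  cover : ∀ v : V, ∃ i, 1 ≤ i ∧ i ≤ η ∧ v ∈ Vset i
  disjoint' : ∀ i j, 1 ≤ i → i ≤ η → 1 ≤ j → j ≤ η →
      ∀ v : V, v ∈ Vset i → v ∈ Vset j → i = j
  strong : ∀ i, 1 ≤ i → i ≤ η → ∀ x ∈ Vset i, ∀ y ∈ Vset i,
      ∃ m, D.HasWalkIn (Vset i) m x y
  arcs : ∀ x y : V, D.Adj x y → ∃ i, 1 ≤ i ∧
      ((i ≤ η ∧ x ∈ Vset i ∧ y ∈ Vset i) ∨
       (i + 1 ≤ η ∧ x ∈ Vset i ∧ y ∈ Vset (i + 1)))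
  linked : ∀ i, 1 ≤ i → i + 1 ≤ η → ∃ x ∈ Vset i, ∃ y ∈ Vset (i + 1), D.Adj x y

/-- A component with vertex set `S` is trivial if `S` is a singleton. -/
def IsTrivialComp (S : Set V) : Prop := ∃ v : V, S = {v}

/-- `κ` is the index of imprimitivity of the (strong) component with vertex set `S`:
the gcd of the lengths of all closed directed walks inside `S`. -/
def IsImprimIndex (D : Digraph' V) (S : Set V) (κ : ℕ) : Prop :=
  (∀ (x : V) (m : ℕ), x ∈ S → 0 < m → D.HasWalkIn S m x x → κ ∣ m) ∧
  ∀ d : ℕ, (∀ (x : V) (m : ℕ), x ∈ S → 0 < m → D.HasWalkIn S m x x → d ∣ m) → d ∣ κ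

/-- `u` is an imprimitivity labelling on `S`: along any arc inside `S` the label
increases by one.  Its fibers are the sets of imprimitivity. -/
def IsImprimLabelling (D : Digraph' V) (S : Set V) {κ : ℕ} (u : V → ZMod κ) : Prop :=
  ∀ x ∈ S, ∀ y ∈ S, D.Adj x y → u y = u x + 1

/-- `(k, l) ∈ I(D_{p,p+1})`: some arc goes from a vertex of `U_k^{(p)}` to a vertex of
`U_l^{(p+1)}`. -/
def InI (D : Digraph' V) (Vset : ℕ → Set V) {κ : ℕ → ℕ}
    (u : ∀ i : ℕ, V → ZMod (κ i)) (p : ℕ) (k : ZMod (κ p)) (l : ZMod (κ (p + 1))) : Prop :=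
  ∃ x ∈ Vset p, ∃ y ∈ Vset (p + 1), D.Adj x y ∧ u p x = k ∧ u (p + 1) y = l

/-- `(i, j)` is an edge of the bipartite graph `B_{p,p+1}`. -/
def BAdj (D : Digraph' V) (Vset : ℕ → Set V) {κ : ℕ → ℕ}
    (u : ∀ i : ℕ, V → ZMod (κ i)) (p : ℕ) (i : ZMod (κ p)) (j : ZMod (κ (p + 1))) : Prop :=
  ∃ (k : ZMod (κ p)) (l : ZMod (κ (p + 1))) (a : ℤ),
    InI D Vset u p k l ∧ i = k + 1 + (a : ZMod (κ p)) ∧ j = l + (a : ZMod (κ (p + 1)))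

/-- The competition skeleton graph (CS-graph) `PT_D^{(η)}`: vertices are pairs `⟨r, i⟩`
with `i ∈ ZMod (κ r)` (only `1 ≤ r ≤ η` carries edges); `⟨p, i⟩` and `⟨p+1, j⟩` are
adjacent exactly when `i` and `j` are adjacent in `B_{p,p+1}`. -/
def csGraph (D : Digraph' V) (Vset : ℕ → Set V) {κ : ℕ → ℕ}
    (u : ∀ i : ℕ, V → ZMod (κ i)) (η : ℕ) : SimpleGraph ((r : ℕ) × ZMod (κ r)) where
  Adj a b := ∃ p, 1 ≤ p ∧ p + 1 ≤ η ∧ ∃ (i : ZMod (κ p)) (j : ZMod (κ (p + 1))),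
    BAdj D Vset u p i j ∧
    ((a = ⟨p, i⟩ ∧ b = ⟨p + 1, j⟩) ∨ (a = ⟨p + 1, j⟩ ∧ b = ⟨p, i⟩))
  symm := by
    constructor
    rintro a b ⟨p, h1, h2, i, j, hB, hab⟩
    exact ⟨p, h1, h2, i, j, hB,
      hab.elim (fun h => Or.inr ⟨h.2, h.1⟩) (fun h => Or.inl ⟨h.2, h.1⟩)⟩
  loopless := by
    constructor
    rintro a ⟨p, _, _, i, j, _, hab⟩
    rcases hab with ⟨ha, hb⟩ | ⟨ha, hb⟩
    · have h : p = p + 1 := congrArg Sigma.fst (ha.symm.trans hb)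
      omega
    · have h : p + 1 = p := congrArg Sigma.fst (ha.symm.trans hb)
      omega

end Digraph'

/-!
Arcs of a linearly connected digraph only stay in a component or pass to the next one, so the
given walk from `x ∈ D_p` to `z ∈ D_q` runs through a vertex `w` of `D_{p+1}`. The lengths of the
closed walks at a vertex of `D_{p+1}` form an additive monoid with gcd `κ_{p+1}`, hence contain all
large multiples of `κ_{p+1}`. Walking on from `w` inside `D_{p+1}` for a suitable number of steps
reaches a vertex `y` such that the `(x, y)`-walk through `w` has length divisible by `κ_{p+1}`.
As `κ_{p+1}` divides the length of the given walk and of every closed walk `w → y → w`, it also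
divides the length of the `(y, z)`-walk through `w`. Padding both walks with closed walks at `y`
gives all large multiples of `κ_{p+1}`.
-/

namespace Digraph'

open Filter

variable {V : Type*} {D : Digraph' V} {S : Set V} {m n : ℕ} {x y z : V}

theorem hasWalkIn_univ : D.HasWalkIn Set.univ m x y ↔ D.HasWalk m x y := by
  simp [HasWalkIn, HasWalk]

theorem HasWalkIn.hasWalk (h : D.HasWalkIn S m x y) : D.HasWalk m x y :=
  let ⟨f, h0, hm, _, ha⟩ := h
  ⟨f, h0, hm, ha⟩

theorem hasWalkIn_zero : D.HasWalkIn S 0 x y ↔ x = y ∧ x ∈ S := by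
  constructor
  · rintro ⟨f, rfl, rfl, hS, -⟩
    exact ⟨rfl, hS 0 le_rfl⟩
  · rintro ⟨rfl, hx⟩
    exact ⟨fun _ => x, rfl, rfl, fun _ _ => hx, fun _ h => absurd h (Nat.not_lt_zero _)⟩

theorem hasWalkIn_succ :
    D.HasWalkIn S (m + 1) x z ↔ x ∈ S ∧ ∃ y, D.Adj x y ∧ D.HasWalkIn S m y z := by
  constructor
  · rintro ⟨f, rfl, rfl, hS, ha⟩
    exact ⟨hS 0 (Nat.zero_le _), f 1, ha 0 m.succ_pos,
      fun t => f (t + 1), rfl, rfl, fun t ht => hS _ (by omega),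
      fun t ht => ha _ (by omega)⟩
  · rintro ⟨hx, y, hxy, g, rfl, rfl, hS, ha⟩
    refine ⟨fun t => if t = 0 then x else g (t - 1), rfl, by simp, ?_, ?_⟩
    · rintro (_ | t) ht
      · exact hx
      · exact hS t (by omega)
    · rintro (_ | t) ht
      · simpa using hxy
      · simpa using ha t (by omega)

theorem HasWalkIn.left_mem (h : D.HasWalkIn S m x y) : x ∈ S :=
  let ⟨_, h0, _, hS, _⟩ := h
  h0 ▸ hS 0 (Nat.zero_le m)

theorem HasWalkIn.right_mem (h : D.HasWalkIn S m x y) : y ∈ S :=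
  let ⟨_, _, hm, hS, _⟩ := h
  hm ▸ hS m le_rfl

theorem HasWalkIn.append (h₁ : D.HasWalkIn S m x y) (h₂ : D.HasWalkIn S n y z) :
    D.HasWalkIn S (m + n) x z := by
  induction m generalizing x with
  | zero =>
    obtain ⟨rfl, -⟩ := hasWalkIn_zero.mp h₁
    simpa using h₂
  | succ m ih =>
    obtain ⟨hx, x', hxx', h⟩ := hasWalkIn_succ.mp h₁
    rw [Nat.add_right_comm]
    exact hasWalkIn_succ.mpr ⟨hx, x', hxx', ih h⟩

theorem HasWalkIn.exists_split (h : D.HasWalkIn S (m + n) x z) :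
    ∃ y, D.HasWalkIn S m x y ∧ D.HasWalkIn S n y z := by
  induction m generalizing x with
  | zero => exact ⟨x, hasWalkIn_zero.mpr ⟨rfl, h.left_mem⟩, by simpa using h⟩
  | succ m ih =>
    rw [Nat.add_right_comm] at h
    obtain ⟨hx, x', hxx', h⟩ := hasWalkIn_succ.mp h
    obtain ⟨y, h₁, h₂⟩ := ih h
    exact ⟨y, hasWalkIn_succ.mpr ⟨hx, x', hxx', h₁⟩, h₂⟩

theorem HasWalk.append (h₁ : D.HasWalk m x y) (h₂ : D.HasWalk n y z) : D.HasWalk (m + n) x z :=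
  hasWalkIn_univ.mp ((hasWalkIn_univ.mpr h₁).append (hasWalkIn_univ.mpr h₂))

theorem hasWalk_zero : D.HasWalk 0 x y ↔ x = y := by
  simp [← hasWalkIn_univ, hasWalkIn_zero]

theorem hasWalk_succ : D.HasWalk (m + 1) x z ↔ ∃ y, D.Adj x y ∧ D.HasWalk m y z := by
  simp [← hasWalkIn_univ, hasWalkIn_succ]

theorem eventually_hasWalk_mul_of_hasWalk_of_eventually {κ : ℕ} (hm : κ ∣ m)
    (h₁ : D.HasWalk m x y) (h₂ : ∀ᶠ k in atTop, D.HasWalk (k * κ) y z) :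
    ∀ᶠ k in atTop, D.HasWalk (k * κ) x z := by
  obtain ⟨c, rfl⟩ := hm
  filter_upwards [(tendsto_sub_atTop_nat c).eventually h₂, eventually_ge_atTop c] with k hk hck
  simpa [mul_comm κ c, ← add_mul, Nat.add_sub_cancel' hck] using h₁.append hk

theorem eventually_hasWalk_mul_of_eventually_of_hasWalk {κ : ℕ} (hm : κ ∣ m)
    (h₁ : ∀ᶠ k in atTop, D.HasWalk (k * κ) x y) (h₂ : D.HasWalk m y z) :
    ∀ᶠ k in atTop, D.HasWalk (k * κ) x z := by
  obtain ⟨c, rfl⟩ := hm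
  filter_upwards [(tendsto_sub_atTop_nat c).eventually h₁, eventually_ge_atTop c] with k hk hck
  simpa [mul_comm κ c, ← add_mul, Nat.sub_add_cancel hck] using hk.append h₂

section Imprimitivity

variable {κ : ℕ}

theorem IsImprimIndex.dvd_of_hasWalkIn (hκ : D.IsImprimIndex S κ) (h : D.HasWalkIn S m x x) :
    κ ∣ m := by
  rcases Nat.eq_zero_or_pos m with rfl | hm
  · exact dvd_zero κ
  · exact hκ.1 x m h.left_mem hm h

theorem IsImprimIndex.pos (hκ : D.IsImprimIndex S κ)
    (hS : ∀ x ∈ S, ∀ y ∈ S, ∃ m, D.HasWalkIn S m x y) (hnt : ¬ IsTrivialComp S) (hx : x ∈ S) :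
    0 < κ := by
  obtain ⟨y, hy, hyx⟩ : ∃ y ∈ S, y ≠ x := by
    by_contra! h
    exact hnt ⟨x, Set.eq_singleton_iff_unique_mem.mpr ⟨hx, h⟩⟩
  obtain ⟨m, hxy⟩ := hS x hx y hy
  obtain ⟨n, hyx'⟩ := hS y hy x hx
  have hm : m ≠ 0 := by
    rintro rfl
    exact hyx (hasWalkIn_zero.mp hxy).1.symm
  refine Nat.pos_of_ne_zero ?_
  rintro rfl
  have := Nat.eq_zero_of_zero_dvd (hκ.dvd_of_hasWalkIn (hxy.append hyx'))
  omega

theorem IsImprimIndex.eventually_hasWalkIn (hκ : D.IsImprimIndex S κ)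
    (hS : ∀ x ∈ S, ∀ y ∈ S, ∃ m, D.HasWalkIn S m x y) (hx : x ∈ S) :
    ∀ᶠ k in atTop, D.HasWalkIn S (k * κ) x x := by
  set A := {m | D.HasWalkIn S m x x}
  have hA : ∀ m ∈ AddSubmonoid.closure A, D.HasWalkIn S m x x := fun m hm =>
    AddSubmonoid.closure_induction (fun _ h => h) (hasWalkIn_zero.mpr ⟨rfl, hx⟩)
      (fun _ _ _ _ => HasWalkIn.append) hm
  -- every closed walk in `S` can be conjugated into one based at `x`
  have hgcd : Nat.setGcd A ∣ κ := hκ.2 _ fun y m hy _ hyy => by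
    obtain ⟨a, hxy⟩ := hS x hx y hy
    obtain ⟨b, hyx⟩ := hS y hy x hx
    have h₁ : Nat.setGcd A ∣ a + b := Nat.setGcd_dvd_of_mem (hxy.append hyx)
    have h₂ : Nat.setGcd A ∣ a + m + b := Nat.setGcd_dvd_of_mem ((hxy.append hyy).append hyx)
    rw [Nat.add_right_comm] at h₂
    exact (Nat.dvd_add_right h₁).mp h₂
  obtain ⟨N, hN⟩ := Nat.exists_mem_closure_of_ge A
  rcases Nat.eq_zero_or_pos κ with rfl | hκ₀
  · exact .of_forall fun k => by simpa [hasWalkIn_zero] using hx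
  filter_upwards [eventually_ge_atTop N] with k hk
  exact hA _ (hN _ (hk.trans (Nat.le_mul_of_pos_right k hκ₀)) (hgcd.trans (dvd_mul_left κ k)))

theorem IsImprimIndex.exists_hasWalkIn_and_hasWalkIn (hκ : D.IsImprimIndex S κ)
    (hS : ∀ x ∈ S, ∀ y ∈ S, ∃ m, D.HasWalkIn S m x y) (hκ₀ : 0 < κ) (hx : x ∈ S) (n : ℕ) :
    ∃ y, D.HasWalkIn S n x y ∧ ∃ m, D.HasWalkIn S m y x := by
  obtain ⟨k, hk, hnk⟩ := ((hκ.eventually_hasWalkIn hS hx).and (eventually_ge_atTop n)).exists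
  rw [← Nat.add_sub_cancel' (hnk.trans (Nat.le_mul_of_pos_right k hκ₀))] at hk
  obtain ⟨y, hxy, hyx⟩ := hk.exists_split
  exact ⟨y, hxy, _, hyx⟩

end Imprimitivity

section LinConn

variable {η : ℕ} {Vset : ℕ → Set V}

theorem IsLinConn.le_succ_of_adj (hD : D.IsLinConn η Vset) {i j : ℕ} (hi : 1 ≤ i) (hiη : i ≤ η)
    (hj : 1 ≤ j) (hjη : j ≤ η) (hx : x ∈ Vset i) (hy : y ∈ Vset j) (h : D.Adj x y) :
    j ≤ i + 1 := by
  obtain ⟨i', hi', ⟨hi'η, hx', hy'⟩ | ⟨hi'η, hx', hy'⟩⟩ := hD.arcs x y h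
  · have := hD.disjoint' i i' hi hiη hi' hi'η x hx hx'
    have := hD.disjoint' j i' hj hjη hi' hi'η y hy hy'
    omega
  · have := hD.disjoint' i i' hi hiη hi' (by omega) x hx hx'
    have := hD.disjoint' j (i' + 1) hj hjη (by omega) hi'η y hy hy'
    omega

theorem IsLinConn.exists_hasWalk_through (hD : D.IsLinConn η Vset) {p q r : ℕ} (hp : 1 ≤ p)
    (hpr : p ≤ r) (hrq : r ≤ q) (hq : q ≤ η) (hx : x ∈ Vset p) (hz : z ∈ Vset q)
    (h : D.HasWalk m x z) :
    ∃ t ≤ m, ∃ y ∈ Vset r, D.HasWalk t x y ∧ D.HasWalk (m - t) y z := by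
  induction m generalizing x p with
  | zero =>
    obtain rfl := hasWalk_zero.mp h
    obtain rfl := hD.disjoint' p q hp (by omega) (by omega) hq x hx hz
    obtain rfl : p = r := by omega
    exact ⟨0, le_rfl, x, hx, hasWalk_zero.mpr rfl, h⟩
  | succ m ih =>
    rcases hpr.eq_or_lt with rfl | hpr
    · exact ⟨0, Nat.zero_le _, x, hx, hasWalk_zero.mpr rfl, h⟩
    obtain ⟨x', hxx', h'⟩ := hasWalk_succ.mp h
    obtain ⟨p', hp', hp'η, hx'⟩ := hD.cover x'
    have := hD.le_succ_of_adj hp (by omega) hp' hp'η hx hx' hxx'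
    obtain ⟨t, ht, y, hy, hx'y, hyz⟩ := ih hp' (by omega) hx' h'
    exact ⟨t + 1, by omega, y, hy, hasWalk_succ.mpr ⟨x', hxx', hx'y⟩, by simpa using hyz⟩

end LinConn

end Digraph'

open Digraph' in
theorem stmt5_general {V : Type*} (D : Digraph' V) (η : ℕ) (Vset : ℕ → Set V)
    (hD : D.IsLinConn η Vset)
    (hnt : ∀ i, 1 ≤ i → i ≤ η → ¬ IsTrivialComp (Vset i))
    (κ : ℕ → ℕ) (u : ∀ i : ℕ, V → ZMod (κ i))
    (hκ : ∀ i, 1 ≤ i → i ≤ η → IsImprimIndex D (Vset i) (κ i))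
    (p q : ℕ) (hp : 1 ≤ p) (hpq : p + 2 ≤ q) (hq : q ≤ η)
    (i : ZMod (κ p)) (x z : V)
    (hx : x ∈ Vset p) (hz : z ∈ Vset q)
    (s : ℕ)
    (hw : D.HasWalk (s * ∏ r ∈ Finset.Icc (p + 1) q, κ r) x z) :
    ∃ j : ZMod (κ (p + 1)), ∃ y ∈ Vset (p + 1), u (p + 1) y = j ∧
      (∃ K, 1 ≤ K ∧ ∀ k', K ≤ k' → D.HasWalk (k' * κ (p + 1)) x y) ∧
      (∃ K', 1 ≤ K' ∧ ∀ k'', K' ≤ k'' → D.HasWalk (k'' * κ (p + 1)) y z) := by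
  have exists_of_eventually : ∀ {P : ℕ → Prop}, (∀ᶠ k in Filter.atTop, P k) →
      ∃ K, 1 ≤ K ∧ ∀ k, K ≤ k → P k := fun h =>
    let ⟨K, hK⟩ := Filter.eventually_atTop.mp h
    ⟨K + 1, Nat.le_add_left 1 K, fun k hk => hK k (by omega)⟩
  set L := s * ∏ r ∈ Finset.Icc (p + 1) q, κ r
  set c := κ (p + 1)
  have hS := hD.strong (p + 1) (by omega) (by omega)
  have hκS := hκ (p + 1) (by omega) (by omega)
  have hL : c ∣ L := (Finset.dvd_prod_of_mem κ (by simp; omega)).mul_left s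
  obtain ⟨t, htL, w, hwS, hxw, hwz⟩ :=
    hD.exists_hasWalk_through hp (Nat.le_succ p) (by omega) hq hx hz hw
  have hc : 0 < c := hκS.pos hS (hnt (p + 1) (by omega) (by omega)) hwS
  obtain ⟨y, hwy, b, hyw⟩ := hκS.exists_hasWalkIn_and_hasWalkIn hS hc hwS ((c - 1) * t)
  have hxy : c ∣ t + (c - 1) * t := ⟨t, by
    rw [Nat.sub_one_mul]
    have := Nat.le_mul_of_pos_left t hc
    omega⟩
  have hyz : c ∣ b + (L - t) := by
    have := dvd_add (hκS.dvd_of_hasWalkIn (hwy.append hyw)) hL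
    rw [show (c - 1) * t + b + L = b + (L - t) + (t + (c - 1) * t) by omega] at this
    exact (Nat.dvd_add_left hxy).mp this
  have hyy := (hκS.eventually_hasWalkIn hS hyw.left_mem).mono fun _ => HasWalkIn.hasWalk
  refine ⟨_, y, hwy.right_mem, rfl, exists_of_eventually ?_, exists_of_eventually ?_⟩
  · exact eventually_hasWalk_mul_of_hasWalk_of_eventually hxy (hxw.append hwy.hasWalk) hyy
  · exact eventually_hasWalk_mul_of_eventually_of_hasWalk hyz hyy (hyw.hasWalk.append hwz)

open Digraph' in
/-- if there is an `(x,z)`-walk of length `s·κ_{p+1}···κ_q` with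
`p + 2 ≤ q ≤ η`, then some vertex `y` of an imprimitivity class of `D_{p+1}` admits
`(x,y)`-walks and `(y,z)`-walks of all lengths `k·κ_{p+1}` for large `k`. -/
theorem stmt5 {V : Type*} [Fintype V] (D : Digraph' V) (η : ℕ) (Vset : ℕ → Set V)
    (hD : D.IsLinConn η Vset) (hη : 3 ≤ η)
    (hnt : ∀ i, 1 ≤ i → i ≤ η → ¬ IsTrivialComp (Vset i))
    (κ : ℕ → ℕ) (u : ∀ i : ℕ, V → ZMod (κ i))
    (hκ : ∀ i, 1 ≤ i → i ≤ η → IsImprimIndex D (Vset i) (κ i))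
    (hu : ∀ i, 1 ≤ i → i ≤ η → IsImprimLabelling D (Vset i) (u i))
    (p q : ℕ) (hp : 1 ≤ p) (hpq : p + 2 ≤ q) (hq : q ≤ η)
    (i : ZMod (κ p)) (k : ZMod (κ q)) (x z : V)
    (hx : x ∈ Vset p) (hxi : u p x = i) (hz : z ∈ Vset q) (hzk : u q z = k)
    (s : ℕ) (hs : 1 ≤ s)
    (hw : D.HasWalk (s * ∏ r ∈ Finset.Icc (p + 1) q, κ r) x z) :
    ∃ j : ZMod (κ (p + 1)), ∃ y ∈ Vset (p + 1), u (p + 1) y = j ∧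
      (∃ K, 1 ≤ K ∧ ∀ k', K ≤ k' → D.HasWalk (k' * κ (p + 1)) x y) ∧
      (∃ K', 1 ≤ K' ∧ ∀ k'', K' ≤ k'' → D.HasWalk (k'' * κ (p + 1)) y z) :=
  stmt5_general D η Vset hD hnt κ u hκ p q hp hpq hq i x z hx hz s hw
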